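/- arXiv:1912.11978 — 5 statements merged into one kernel-verified Lean document; each statement's English description precedes it below -/
import Mathlib

section
/- (Serret's theorem) Let p and q be relatively prime positive integers with q < p. The continued fraction representation of q/p (with the convention allowing the last entry to be split as a_N = (a_N − 1) + 1/1 if needed to adjust parity) is palindromic, i.e., a_k = a_{N−k} for all k, if and only if p divides q² + 1 or p divides q² − 1. -/
/-!
The entries of a continued fraction give the matrix `M = ∏ᵢ [[aᵢ, 1], [1, 0]] = [[p, b], [q, d]]`,
a product of symmetric matrices, so reversing the entries transposes `M`, and `pd - bq = (-1)^n`
for `n` entries. A list of positive entries is recovered from its matrix (each entry is a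
quotient), so the list is a palindrome iff `b = q`. Then the determinant gives `p ∣ q² + (-1)^n`.
Conversely `p ∣ q² + (-1)^n` gives `p ∣ q (q - b)`, so `b = q` because `0 < b ≤ p`. Replacing the
last entry `x + 1` by `x, 1` keeps the value and flips the parity of `n`, so both signs occur.
-/

/-- Value of the finite continued fraction `1/(a_0 + 1/(a_1 + ... + 1/a_N))`
    with entries given by a list `[a_0, ..., a_N]`. -/
def cfVal : List ℕ → ℚ
  | [] => 0
  | a :: t => 1 / (a + cfVal t)

open Matrix

def cfMatrix (L : List ℕ) : Matrix (Fin 2) (Fin 2) ℤ :=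
  (L.map fun a : ℕ => !![(a : ℤ), 1; 1, 0]).prod

@[simp]
lemma cfMatrix_nil : cfMatrix [] = 1 := rfl

lemma cfMatrix_cons (a : ℕ) (t : List ℕ) :
    cfMatrix (a :: t) = !![(a : ℤ), 1; 1, 0] * cfMatrix t := rfl

lemma cfMatrix_cons_eta (a : ℕ) (t : List ℕ) :
    cfMatrix (a :: t) = !![a * cfMatrix t 0 0 + cfMatrix t 1 0, a * cfMatrix t 0 1 + cfMatrix t 1 1;
      cfMatrix t 0 0, cfMatrix t 0 1] := by
  rw [cfMatrix_cons, eta_fin_two (cfMatrix t), mul_fin_two]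
  simp

lemma cfMatrix_reverse (L : List ℕ) : cfMatrix L.reverse = (cfMatrix L)ᵀ := by
  have hsymm (a : ℕ) : (!![(a : ℤ), 1; 1, 0])ᵀ = !![(a : ℤ), 1; 1, 0] := by
    ext i j; fin_cases i <;> fin_cases j <;> rfl
  simp only [cfMatrix, transpose_list_prod, List.map_map, List.map_reverse, Function.comp_def,
    hsymm]

lemma det_cfMatrix (L : List ℕ) : (cfMatrix L).det = (-1) ^ L.length := by
  induction L with
  | nil => simp
  | cons a t ih =>
    rw [cfMatrix_cons, det_mul, det_fin_two_of, ih, List.length_cons, pow_succ']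
    ring

lemma cfMatrix_eq_mul_cfMatrix_cons (a : ℕ) (t : List ℕ) :
    cfMatrix t = !![0, 1; 1, -(a : ℤ)] * cfMatrix (a :: t) := by
  rw [cfMatrix_cons, ← mul_assoc, mul_fin_two]
  simp [← one_fin_two]

lemma cfMatrix_bounds {L : List ℕ} (hL : L ≠ []) (hpos : ∀ a ∈ L, 0 < a) :
    0 < cfMatrix L 0 1 ∧ cfMatrix L 0 1 ≤ cfMatrix L 0 0 ∧
      0 < cfMatrix L 1 0 ∧ 0 ≤ cfMatrix L 1 1 ∧ cfMatrix L 1 1 ≤ cfMatrix L 1 0 ∧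
      cfMatrix L 1 0 + cfMatrix L 1 1 < cfMatrix L 0 0 + cfMatrix L 0 1 := by
  obtain ⟨a, t, rfl⟩ := List.exists_cons_of_ne_nil hL
  induction t generalizing a with
  | nil =>
    have ha : 0 < a := hpos a (by simp)
    simpa [cfMatrix_cons_eta] using (⟨ha, ha⟩ : 1 ≤ a ∧ 0 < a)
  | cons b t ih =>
    have ha : 1 ≤ (a : ℤ) := by exact_mod_cast hpos a (by simp)
    obtain ⟨hB, hBA, hC, hD, hDC, -⟩ :=
      ih b (by simp) fun x hx => hpos x (List.mem_cons_of_mem a hx)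
    rw [cfMatrix_cons_eta a]
    simp only [of_apply, cons_val', cons_val_zero, cons_val_one, empty_val', cons_val_fin_one]
    refine ⟨by nlinarith, by nlinarith, by omega, by omega, hBA, by nlinarith⟩

lemma cfVal_eq_div {L : List ℕ} (hL : L ≠ []) (hpos : ∀ a ∈ L, 0 < a) :
    cfVal L = (cfMatrix L 1 0 : ℚ) / cfMatrix L 0 0 := by
  obtain ⟨a, t, rfl⟩ := List.exists_cons_of_ne_nil hL
  induction t generalizing a with
  | nil => simp [cfVal, cfMatrix_cons_eta]
  | cons b t ih =>
    have htpos : ∀ x ∈ b :: t, 0 < x := fun x hx => hpos x (List.mem_cons_of_mem a hx)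
    have hA : (0 : ℚ) < cfMatrix (b :: t) 0 0 := by
      obtain ⟨hB, hBA, -⟩ := cfMatrix_bounds (List.cons_ne_nil b t) htpos
      exact_mod_cast hB.trans_le hBA
    rw [cfVal, ih b (List.cons_ne_nil b t) htpos, cfMatrix_cons_eta a (b :: t)]
    simp only [of_apply, cons_val', cons_val_zero, cons_val_one, empty_val', cons_val_fin_one]
    push_cast
    field_simp

lemma isCoprime_cfMatrix (L : List ℕ) : IsCoprime (cfMatrix L 0 0) (cfMatrix L 1 0) := by
  have hdet := det_cfMatrix L
  rw [det_fin_two] at hdet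
  have hsq : ((-1 : ℤ) ^ L.length) ^ 2 = 1 := by rw [← pow_mul, pow_mul', neg_one_sq, one_pow]
  refine ⟨(-1) ^ L.length * cfMatrix L 1 1, -(-1) ^ L.length * cfMatrix L 0 1, ?_⟩
  linear_combination (-1) ^ L.length * hdet + hsq

lemma cfMatrix_col_zero_of_cfVal_eq {L : List ℕ} (hL : L ≠ []) (hpos : ∀ a ∈ L, 0 < a)
    {p q : ℕ} (hp : 0 < p) (hcop : Nat.Coprime p q) (hv : (q : ℚ) / p = cfVal L) :
    cfMatrix L 0 0 = p ∧ cfMatrix L 1 0 = q := by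
  have hA : 0 < cfMatrix L 0 0 := by
    obtain ⟨hB, hBA, -⟩ := cfMatrix_bounds hL hpos
    exact hB.trans_le hBA
  rw [cfVal_eq_div hL hpos] at hv
  have hcopL := Int.isCoprime_iff_gcd_eq_one.mp (isCoprime_cfMatrix L)
  rw [Int.gcd_eq_natAbs, Nat.gcd_comm] at hcopL
  have := Rat.div_int_inj (a := q) (b := p) (by exact_mod_cast hp) hA
    (by simpa [Nat.coprime_comm] using hcop) hcopL (by push_cast; exact hv)
  exact ⟨this.2.symm, this.1.symm⟩

lemma cfMatrix_zero_one_eq_zero_iff {L : List ℕ} (hpos : ∀ a ∈ L, 0 < a) :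
    cfMatrix L 0 1 = 0 ↔ L = [] := by
  refine ⟨fun h => ?_, fun h => by simp [h]⟩
  by_contra hL
  exact (cfMatrix_bounds hL hpos).1.ne' h

lemma head_eq_of_cfMatrix_eq {a b : ℕ} {t s : List ℕ} (ht : ∀ x ∈ t, 0 < x)
    (hs : ∀ x ∈ s, 0 < x) (h : cfMatrix (a :: t) = cfMatrix (b :: s)) : a = b := by
  rw [cfMatrix_cons_eta, cfMatrix_cons_eta, ← Matrix.ext_iff] at h
  have h00 := h 0 0
  have h01 := h 0 1
  have h10 := h 1 0
  have h11 := h 1 1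
  simp only [of_apply, cons_val', cons_val_zero, cons_val_one, empty_val', cons_val_fin_one]
    at h00 h01 h10 h11
  rcases eq_or_ne t [] with rfl | htne
  · obtain rfl : s = [] := (cfMatrix_zero_one_eq_zero_iff hs).mp (by simpa using h11.symm)
    simpa using h00
  have hsne : s ≠ [] := fun hs' =>
    htne <| (cfMatrix_zero_one_eq_zero_iff ht).mp (by simp [hs', h11])
  obtain ⟨-, -, hCt, hDt, -, hsumt⟩ := cfMatrix_bounds htne ht
  obtain ⟨-, -, hCs, hDs, -, hsums⟩ := cfMatrix_bounds hsne hs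
  -- `a` and `b` are both the quotient of the first-row sum of `cfMatrix (a :: t)` by the common
  -- first-row sum of `cfMatrix t` and `cfMatrix s`; the remainders are their second-row sums
  have key : (a : ℤ) = b := by nlinarith
  exact_mod_cast key

lemma eq_of_cfMatrix_eq {L₁ L₂ : List ℕ} (h₁ : ∀ a ∈ L₁, 0 < a) (h₂ : ∀ a ∈ L₂, 0 < a)
    (h : cfMatrix L₁ = cfMatrix L₂) : L₁ = L₂ := by
  induction L₁ generalizing L₂ with
  | nil => exact ((cfMatrix_zero_one_eq_zero_iff h₂).mp (by simp [← h])).symm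
  | cons a t ih =>
    obtain ⟨b, s, rfl⟩ := List.exists_cons_of_ne_nil (l := L₂) fun hL₂ =>
      List.cons_ne_nil a t <| (cfMatrix_zero_one_eq_zero_iff h₁).mp (by simp [h, hL₂])
    have ht : ∀ x ∈ t, 0 < x := fun x hx => h₁ x (List.mem_cons_of_mem a hx)
    have hs : ∀ x ∈ s, 0 < x := fun x hx => h₂ x (List.mem_cons_of_mem b hx)
    obtain rfl := head_eq_of_cfMatrix_eq ht hs h
    rw [ih ht hs (by rw [cfMatrix_eq_mul_cfMatrix_cons a t, cfMatrix_eq_mul_cfMatrix_cons a s, h])]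

lemma cfVal_append_pair_one (L : List ℕ) (x : ℕ) :
    cfVal (L ++ [x, 1]) = cfVal (L ++ [x + 1]) := by
  induction L with
  | nil => simp [cfVal]
  | cons a t ih => simp only [List.cons_append, cfVal, ih]

lemma exists_cfVal_eq_append_of_two_le {p q : ℕ} (hq : 0 < q) (hqp : q < p)
    (hcop : Nat.Coprime p q) :
    ∃ L x, (∀ a ∈ L, 0 < a) ∧ 2 ≤ x ∧ (q : ℚ) / p = cfVal (L ++ [x]) := by
  induction q using Nat.strong_induction_on generalizing p with
  | _ q ih =>
  rcases Nat.eq_zero_or_pos (p % q) with hr | hr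
  · obtain rfl : q = 1 := Nat.eq_one_of_dvd_coprimes hcop.symm dvd_rfl (Nat.dvd_of_mod_eq_zero hr)
    exact ⟨[], p, by simp, hqp, by simp [cfVal]⟩
  · have hcop' : Nat.Coprime q (p % q) := by
      rw [Nat.Coprime, Nat.gcd_comm, ← Nat.gcd_rec, Nat.gcd_comm]
      exact hcop
    obtain ⟨L, x, hL, hx, hv⟩ := ih (p % q) (Nat.mod_lt p hq) hr (Nat.mod_lt p hq) hcop'
    refine ⟨p / q :: L, x, ?_, hx, ?_⟩
    · simpa [Nat.div_pos hqp.le hq] using hL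
    · rw [List.cons_append, cfVal, ← hv]
      have hdiv : (p : ℚ) = q * (p / q : ℕ) + (p % q : ℕ) := by
        exact_mod_cast (Nat.div_add_mod p q).symm
      rw [hdiv]
      field_simp

lemma exists_cfVal_eq_of_neg_one_pow_length {p q : ℕ} (hq : 0 < q) (hqp : q < p)
    (hcop : Nat.Coprime p q) (n : ℕ) :
    ∃ L : List ℕ, L ≠ [] ∧ (∀ a ∈ L, 0 < a) ∧ (-1 : ℤ) ^ L.length = (-1) ^ n ∧
      (q : ℚ) / p = cfVal L := by
  obtain ⟨L, x, hL, hx, hv⟩ := exists_cfVal_eq_append_of_two_le hq hqp hcop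
  obtain ⟨y, rfl⟩ : ∃ y, x = y + 1 := ⟨x - 1, by omega⟩
  have hpos : ∀ a ∈ L ++ [y + 1], 0 < a := by simpa [or_imp, forall_and] using hL
  have hpos' : ∀ a ∈ L ++ [y, 1], 0 < a := by
    simpa [or_imp, forall_and, show 0 < y by omega] using hL
  have hsign (m : ℕ) (hm : (m + n) % 2 = 0) : (-1 : ℤ) ^ m = (-1) ^ n := by
    rw [neg_one_pow_eq_pow_mod_two, neg_one_pow_eq_pow_mod_two (R := ℤ) n]
    congr 1
    omega
  rcases Nat.mod_two_eq_zero_or_one (L.length + 1 + n) with h | h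
  · exact ⟨L ++ [y + 1], by simp, hpos, hsign _ (by simpa using h), hv⟩
  · refine ⟨L ++ [y, 1], by simp, hpos', hsign _ ?_, hv.trans (cfVal_append_pair_one L y).symm⟩
    simp only [List.length_append, List.length_cons, List.length_nil]
    omega

lemma reverse_eq_iff_dvd {L : List ℕ} (hL : L ≠ []) (hpos : ∀ a ∈ L, 0 < a) {p q : ℕ}
    (hq : 0 < q) (hqp : q < p) (hcop : Nat.Coprime p q) (hv : (q : ℚ) / p = cfVal L) :
    L.reverse = L ↔ (p : ℤ) ∣ (q : ℤ) ^ 2 + (-1) ^ L.length := by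
  obtain ⟨hA, hC⟩ := cfMatrix_col_zero_of_cfVal_eq hL hpos (hq.trans hqp) hcop hv
  have hdet := det_cfMatrix L
  rw [det_fin_two, hA, hC] at hdet
  have hsymm : L.reverse = L ↔ cfMatrix L 0 1 = q := by
    constructor
    · intro h
      have h01 := congrFun₂ (cfMatrix_reverse L) 0 1
      rwa [h, transpose_apply, hC] at h01
    · intro h
      refine eq_of_cfMatrix_eq (by simpa using hpos) hpos ?_
      rw [cfMatrix_reverse, eta_fin_two (cfMatrix L)ᵀ, eta_fin_two (cfMatrix L)]
      simp [h, hC]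
  rw [hsymm]
  constructor
  · intro h
    exact ⟨cfMatrix L 1 1, by rw [← hdet, h]; ring⟩
  · rintro ⟨m, hm⟩
    have hdvd : (p : ℤ) ∣ (cfMatrix L 0 1 - q) * q :=
      ⟨cfMatrix L 1 1 - m, by linear_combination -hdet - hm⟩
    have hcop' : IsCoprime (p : ℤ) q := Nat.isCoprime_iff_coprime.mpr hcop
    obtain ⟨hB, hBA, -⟩ := cfMatrix_bounds hL hpos
    have := Int.eq_zero_of_abs_lt_dvd (hcop'.dvd_of_dvd_mul_right hdvd) (by rw [abs_lt]; omega)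
    omega

/-- **The Serret theorem.** `q/p` has a palindromic continued fraction representation
    (with positive integer entries, allowing the trick `a_N = (a_N - 1) + 1/1`)
    iff `p ∣ q² + 1` or `p ∣ q² - 1`. -/
theorem stmt_3 (p q : ℕ) (hq : 0 < q) (hqp : q < p) (hcop : Nat.Coprime p q) :
    (∃ L : List ℕ, L ≠ [] ∧ (∀ a ∈ L, 0 < a) ∧ L.reverse = L ∧
        (q : ℚ) / p = cfVal L) ↔
      ((p : ℤ) ∣ (q : ℤ) ^ 2 + 1 ∨ (p : ℤ) ∣ (q : ℤ) ^ 2 - 1) := by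
  constructor
  · rintro ⟨L, hL, hpos, hrev, hv⟩
    have hdvd := (reverse_eq_iff_dvd hL hpos hq hqp hcop hv).mp hrev
    rcases neg_one_pow_eq_or ℤ L.length with h | h
    · exact .inl (h ▸ hdvd)
    · exact .inr (by simpa [h, ← sub_eq_add_neg] using hdvd)
  · intro h
    obtain ⟨n, hn⟩ : ∃ n : ℕ, (p : ℤ) ∣ (q : ℤ) ^ 2 + (-1) ^ n := by
      rcases h with h | h
      · exact ⟨0, by simpa using h⟩
      · exact ⟨1, by simpa [← sub_eq_add_neg] using h⟩
    obtain ⟨L, hL, hpos, hsign, hv⟩ := exists_cfVal_eq_of_neg_one_pow_length hq hqp hcop n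
    exact ⟨L, hL, hpos, (reverse_eq_iff_dvd hL hpos hq hqp hcop hv).mpr (hsign ▸ hn), hv⟩
end

section
/- Let P and Q be monic real polynomials with deg P = n ≥ 2 and deg Q = n − 1, both having only real simple zeros. The zeros of P and Q strictly interlace if and only if there exist a real number a, a real number b > 0, and a monic polynomial R of degree n − 2 such that P(x) = (x − a)Q(x) − b·R(x). Moreover, in that case R has only real zeros and its zeros interlace the zeros of Q. -/
/-!
Both sides are equivalent to the sign pattern `0 < (-1) ^ (n - 1 - j) * P(m j)` at the zeros of
`Q`. Interlacing gives the pattern by reading off the signs of the factors of `P`; conversely,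
the number of zeros of `P` above `m j` then has the parity of `n - 1 - j` and strictly decreases
in `j`, so it equals `n - 1 - j`.

Given the pattern, choose `a` so that `D = (X - a) Q - P` has degree at most `n - 2`. Since
`D = -P` at the zeros of `Q`, it alternates in sign there, so it has a zero strictly between any
two consecutive zeros of `Q`; these are all of its zeros, and its leading coefficient `b` is
positive by the sign of `D` at the largest zero of `Q`. Conversely, `P = -b R` at the zeros of
`Q`, and the sign of `R` there is read off from its factorisation.
-/

open Polynomial Finset

lemma strictMonoOn_Iio_of_lt_succ {β : Type*} [Preorder β] {c : ℕ → β} {N : ℕ}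
    (h : ∀ i, i + 1 < N → c i < c (i + 1)) : StrictMonoOn c (Set.Iio N) := by
  intro i hi j hj hij
  refine strictMonoOn_Iic_of_lt_succ (n := N - 1) (fun k hk => ?_) ?_ ?_ hij
  · simpa using h k (by omega)
  all_goals simp_all only [Set.mem_Iio, Set.mem_Iic]; omega

lemma apply_add_sub_le_of_succ_lt {f : ℕ → ℕ} {K : ℕ} (hf : ∀ j, j + 1 < K → f (j + 1) < f j)
    {i j : ℕ} (hij : i ≤ j) (hjK : j < K) : f j + (j - i) ≤ f i := by
  induction j, hij using Nat.le_induction with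
  | base => simp
  | succ j hij ih =>
    have := hf j hjK
    have := ih (by omega)
    omega

lemma even_add_of_neg_one_pow_mul_pos {a b : ℕ} {y : ℝ} (ha : 0 < (-1) ^ a * y)
    (hb : 0 < (-1) ^ b * y) : Even (a + b) := by
  have hpos : 0 < ((-1 : ℝ) ^ (a + b)) * y ^ 2 := by
    have : ((-1 : ℝ) ^ (a + b)) * y ^ 2 = ((-1) ^ a * y) * ((-1) ^ b * y) := by ring
    exact this ▸ mul_pos ha hb
  rcases neg_one_pow_eq_or ℝ (a + b) with h | h
  · exact (neg_one_pow_eq_one_iff_even (by norm_num)).mp h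
  · nlinarith [sq_nonneg y]

lemma exists_isRoot_mem_Ioo_of_neg_one_pow {p : ℝ[X]} {u v : ℝ} (huv : u < v) {e : ℕ}
    (hu : 0 < (-1) ^ (e + 1) * p.eval u) (hv : 0 < (-1) ^ e * p.eval v) :
    ∃ x ∈ Set.Ioo u v, p.IsRoot x := by
  have hcont := p.continuous.continuousOn (s := Set.Icc u v)
  rcases neg_one_pow_eq_or ℝ e with h | h <;> simp only [pow_succ, h] at hu hv
  · exact intermediate_value_Ioo huv.le hcont ⟨by linarith, by linarith⟩
  · exact intermediate_value_Ioo' huv.le hcont ⟨by linarith, by linarith⟩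

lemma isRoot_prod_X_sub_C_range {m : ℕ → ℝ} {N j : ℕ} (hj : j < N) :
    (∏ i ∈ range N, (X - C (m i))).IsRoot (m j) :=
  (isRoot_prod _ _ _).mpr ⟨j, mem_range.mpr hj, root_X_sub_C.mpr rfl⟩

section NumAbove

variable (c : ℕ → ℝ) (N : ℕ)

noncomputable def numAbove (x : ℝ) : ℕ := #{i ∈ range N | x < c i}

variable {c N}

lemma neg_one_pow_numAbove_mul_prod_pos {x : ℝ} (hx : ∀ i < N, c i ≠ x) :
    0 < (-1) ^ numAbove c N x * ∏ i ∈ range N, (x - c i) := by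
  rw [numAbove, ← prod_const, prod_filter, ← prod_mul_distrib]
  refine prod_pos fun i hi => ?_
  have := hx i (mem_range.mp hi)
  split_ifs with h
  · linarith
  · have := lt_of_le_of_ne (not_lt.mp h) this
    linarith

lemma numAbove_eq_of_gap {x : ℝ} {j : ℕ} (hbelow : ∀ i < j, c i < x)
    (habove : ∀ i, j ≤ i → i < N → x < c i) : numAbove c N x = N - j := by
  rw [numAbove, ← Nat.card_Ico]
  congr 1
  ext i
  simp only [mem_filter, mem_range, mem_Ico]
  refine ⟨fun ⟨hiN, hxi⟩ => ⟨?_, hiN⟩, fun ⟨hji, hiN⟩ => ⟨hiN, habove i hji hiN⟩⟩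
  by_contra hij
  exact lt_asymm hxi (hbelow i (by omega))

lemma neg_one_pow_mul_prod_pos_of_gap {x : ℝ} {j : ℕ} (hbelow : ∀ i < j, c i < x)
    (habove : ∀ i, j ≤ i → i < N → x < c i) :
    0 < (-1) ^ (N - j) * ∏ i ∈ range N, (x - c i) := by
  rw [← numAbove_eq_of_gap hbelow habove]
  refine neg_one_pow_numAbove_mul_prod_pos fun i hi => ?_
  rcases Nat.lt_or_ge i j with h | h
  · exact (hbelow i h).ne
  · exact (habove i h hi).ne'

lemma lt_and_lt_of_numAbove_eq (hc : StrictMonoOn c (Set.Iio N)) {x : ℝ}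
    (hx : ∀ i < N, c i ≠ x) {j : ℕ} (hj : j + 1 < N) (h : numAbove c N x = N - (j + 1)) :
    c j < x ∧ x < c (j + 1) := by
  have hmono := hc.monotoneOn
  constructor
  · by_contra! hxj
    have hsub : Ico j N ⊆ {i ∈ range N | x < c i} := fun i hi => by
      simp only [mem_Ico] at hi
      simp only [mem_filter, mem_range]
      exact ⟨hi.2, (lt_of_le_of_ne hxj (hx j (by omega)).symm).trans_le
        (hmono (Set.mem_Iio.mpr (by omega)) (Set.mem_Iio.mpr (by omega)) hi.1)⟩
    have := card_le_card hsub
    rw [Nat.card_Ico, ← numAbove, h] at this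
    omega
  · by_contra! hxj
    have hsub : {i ∈ range N | x < c i} ⊆ Ico (j + 2) N := fun i hi => by
      simp only [mem_filter, mem_range] at hi
      simp only [mem_Ico]
      refine ⟨?_, hi.1⟩
      by_contra! hij
      have := hmono (Set.mem_Iio.mpr (by omega)) (Set.mem_Iio.mpr (by omega))
        (Nat.le_of_lt_succ hij)
      linarith [hi.2]
    have := card_le_card hsub
    rw [Nat.card_Ico, ← numAbove, h] at this
    omega

end NumAbove

section Interlacing

variable {l m : ℕ → ℝ} {n : ℕ}

lemma neg_one_pow_mul_prod_pos_of_mem_Ioo (hl : StrictMonoOn l (Set.Iio n)) {j : ℕ}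
    (hj : j + 1 < n) {x : ℝ} (hx : x ∈ Set.Ioo (l j) (l (j + 1))) :
    0 < (-1) ^ (n - (j + 1)) * ∏ i ∈ range n, (x - l i) :=
  neg_one_pow_mul_prod_pos_of_gap
    (fun i hi => (hl.monotoneOn (Set.mem_Iio.mpr (by omega)) (Set.mem_Iio.mpr (by omega))
      (Nat.le_of_lt_succ hi)).trans_lt hx.1)
    (fun i hi hin => hx.2.trans_le
      (hl.monotoneOn (Set.mem_Iio.mpr hj) (Set.mem_Iio.mpr hin) hi))

lemma neg_one_pow_mul_prod_pos_of_interlace {r : ℕ → ℝ} {K : ℕ}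
    (hm : StrictMonoOn m (Set.Iio n)) (hK : K < n)
    (hint : ∀ i < K, m i < r i ∧ r i < m (i + 1)) {j : ℕ} (hj : j ≤ K) :
    0 < (-1) ^ (K - j) * ∏ i ∈ range K, (m j - r i) :=
  neg_one_pow_mul_prod_pos_of_gap
    (fun i hi => (hint i (by omega)).2.trans_le
      (hm.monotoneOn (Set.mem_Iio.mpr (by omega)) (Set.mem_Iio.mpr (by omega)) hi))
    (fun i hji hi => (hm.monotoneOn (Set.mem_Iio.mpr (by omega)) (Set.mem_Iio.mpr (by omega))
      hji).trans_lt (hint i hi).1)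

lemma interlace_of_neg_one_pow_mul_prod_pos (hl : StrictMonoOn l (Set.Iio n))
    (hm : StrictMonoOn m (Set.Iio (n - 1)))
    (halt : ∀ j < n - 1, 0 < (-1) ^ (n - 1 - j) * ∏ i ∈ range n, (m j - l i)) :
    ∀ j < n - 1, l j < m j ∧ m j < l (j + 1) := by
  set c : ℕ → ℕ := fun k => numAbove l n (m k)
  have hne : ∀ k < n - 1, ∀ i < n, l i ≠ m k := fun k hk i hi heq => by
    have := halt k hk
    rw [prod_eq_zero (mem_range.mpr hi) (by rw [heq, sub_self]), mul_zero] at this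
    exact lt_irrefl 0 this
  have hpar : ∀ k < n - 1, (c k + (n - 1 - k)) % 2 = 0 := fun k hk =>
    Nat.even_iff.mp (even_add_of_neg_one_pow_mul_pos
      (neg_one_pow_numAbove_mul_prod_pos (hne k hk)) (halt k hk))
  have hanti : ∀ k, k + 1 < n - 1 → c (k + 1) < c k := fun k hk => by
    have hle : c (k + 1) ≤ c k := card_le_card fun i hi => by
      simp only [mem_filter] at hi ⊢
      exact ⟨hi.1, (hm (Set.mem_Iio.mpr (by omega)) (Set.mem_Iio.mpr (by omega))
        (Nat.lt_succ_self k)).trans hi.2⟩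
    have := hpar k (by omega)
    have := hpar (k + 1) hk
    omega
  have hc0 : c 0 ≤ n := (card_filter_le _ _).trans (card_range n).le
  intro j hj
  have h0 := hpar 0 (by omega)
  have htop := hpar (n - 2) (by omega)
  have hlow := apply_add_sub_le_of_succ_lt hanti (Nat.zero_le j) hj
  have hhigh := apply_add_sub_le_of_succ_lt hanti (show j ≤ n - 2 by omega) (by omega)
  exact lt_and_lt_of_numAbove_eq hl (hne j hj) (by omega) (show c j = n - (j + 1) by omega)

theorem interlace_iff_neg_one_pow_mul_prod_pos (hl : StrictMonoOn l (Set.Iio n))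
    (hm : StrictMonoOn m (Set.Iio (n - 1))) :
    (∀ j < n - 1, l j < m j ∧ m j < l (j + 1)) ↔
      ∀ j < n - 1, 0 < (-1) ^ (n - 1 - j) * ∏ i ∈ range n, (m j - l i) :=
  ⟨fun hint j hj => by
    rw [show n - 1 - j = n - (j + 1) by omega]
    exact neg_one_pow_mul_prod_pos_of_mem_Ioo hl (by omega) (hint j hj),
    interlace_of_neg_one_pow_mul_prod_pos hl hm⟩

end Interlacing

lemma natDegree_X_sub_C_nextCoeff_mul_sub_le {R : Type*} [CommRing R] [Nontrivial R]
    {P Q : R[X]} (hP : P.Monic) (hQ : Q.Monic) (hdeg : P.natDegree = Q.natDegree + 1) :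
    ((X - C (Q.nextCoeff - P.nextCoeff)) * Q - P).natDegree ≤ Q.natDegree - 1 := by
  set M := (X - C (Q.nextCoeff - P.nextCoeff)) * Q
  have hMm : M.Monic := (monic_X_sub_C _).mul hQ
  have hMd : M.natDegree = Q.natDegree + 1 := by
    rw [(monic_X_sub_C _).natDegree_mul hQ, natDegree_X_sub_C, add_comm]
  have hnext : M.nextCoeff = P.nextCoeff := by
    rw [(monic_X_sub_C _).nextCoeff_mul hQ, nextCoeff_X_sub_C]; ring
  rw [nextCoeff_of_natDegree_pos (by omega), nextCoeff_of_natDegree_pos (by omega), hMd, hdeg,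
    Nat.add_sub_cancel] at hnext
  rw [natDegree_le_iff_coeff_eq_zero]
  intro k hk
  rw [coeff_sub, sub_eq_zero]
  rcases (by omega : k = Q.natDegree ∨ k = Q.natDegree + 1 ∨ Q.natDegree + 1 < k) with
    rfl | rfl | hk
  · exact hnext
  · rw [← hMd, hMm.coeff_natDegree, hMd, ← hdeg, hP.coeff_natDegree]
  · rw [coeff_eq_zero_of_natDegree_lt (by omega), coeff_eq_zero_of_natDegree_lt (by omega)]

lemma eq_C_leadingCoeff_mul_prod_X_sub_C {D : ℝ[X]} (hD : D ≠ 0) {K : ℕ} (hdeg : D.natDegree ≤ K)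
    {r : ℕ → ℝ} (hr : Set.InjOn r (Set.Iio K)) (hroot : ∀ i < K, D.IsRoot (r i)) :
    D = C D.leadingCoeff * ∏ i ∈ range K, (X - C (r i)) := by
  set S : Multiset ℝ := (range K).val.map r
  have hnodup : S.Nodup := (range K).nodup.map_on fun i hi j hj hij =>
    hr (by simpa using hi) (by simpa using hj) hij
  have hle : S ≤ D.roots := (Multiset.le_iff_subset hnodup).mpr fun x hx => by
    obtain ⟨i, hi, rfl⟩ := Multiset.mem_map.mp hx
    exact (mem_roots hD).mpr (hroot i (by simpa using hi))
  have hS : Multiset.card S = K := by simp [S]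
  have hroots : D.roots = S :=
    (Multiset.eq_of_le_of_card_le hle (by linarith [D.card_roots'])).symm
  have hcard : Multiset.card D.roots = D.natDegree := by
    linarith [D.card_roots', hroots ▸ hS]
  conv_lhs => rw [← C_leadingCoeff_mul_prod_multiset_X_sub_C hcard, hroots]
  simp [S, Multiset.map_map, Finset.prod]

lemma exists_eq_C_mul_prod_of_neg_one_pow_mul_eval_pos {m : ℕ → ℝ} {N : ℕ}
    (hm : StrictMonoOn m (Set.Iio N)) (hN : 0 < N) {D : ℝ[X]} (hdeg : D.natDegree ≤ N - 1)
    (halt : ∀ j < N, 0 < (-1) ^ (N - 1 - j) * D.eval (m j)) :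
    ∃ b, 0 < b ∧ ∃ r : ℕ → ℝ, D = C b * ∏ i ∈ range (N - 1), (X - C (r i)) ∧
      ∀ i < N - 1, m i < r i ∧ r i < m (i + 1) := by
  have hgap : ∀ i < N - 1, ∃ x ∈ Set.Ioo (m i) (m (i + 1)), D.IsRoot x := fun i hi =>
    exists_isRoot_mem_Ioo_of_neg_one_pow
      (hm (Set.mem_Iio.mpr (by omega)) (Set.mem_Iio.mpr (by omega)) i.lt_succ_self)
      (by simpa only [show N - 1 - i = N - 1 - (i + 1) + 1 by omega] using halt i (by omega))
      (halt (i + 1) (by omega))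
  choose! r hr hroot using hgap
  have hrmono : StrictMonoOn r (Set.Iio (N - 1)) := fun i (hi : i < N - 1) j (hj : j < N - 1) hij =>
    ((hr i hi).2.trans_le (hm.monotoneOn (Set.mem_Iio.mpr (by omega))
      (Set.mem_Iio.mpr (by omega)) hij)).trans (hr j hj).1
  have htop := halt (N - 1) (by omega)
  rw [Nat.sub_self, pow_zero, one_mul] at htop
  have hD : D ≠ 0 := fun h => by simp [h] at htop
  have hDeq := eq_C_leadingCoeff_mul_prod_X_sub_C hD hdeg hrmono.injOn hroot
  refine ⟨D.leadingCoeff, ?_, r, hDeq, fun i hi => hr i hi⟩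
  have hprod := neg_one_pow_mul_prod_pos_of_interlace hm (by omega : N - 1 < N) hr le_rfl
  rw [Nat.sub_self, pow_zero, one_mul] at hprod
  rw [hDeq, eval_mul, eval_C, eval_prod] at htop
  simp only [eval_sub, eval_X, eval_C] at htop
  exact (pos_iff_pos_of_mul_pos htop).mpr hprod

lemma exists_eq_X_sub_C_mul_prod_sub_of_neg_one_pow_mul_eval_pos {P : ℝ[X]} (hP : P.Monic)
    {N : ℕ} (hN : 0 < N) (hPd : P.natDegree = N + 1) {m : ℕ → ℝ}
    (hm : StrictMonoOn m (Set.Iio N)) (halt : ∀ j < N, 0 < (-1) ^ (N - j) * P.eval (m j)) :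
    ∃ a b, 0 < b ∧ ∃ r : ℕ → ℝ,
      P = (X - C a) * ∏ i ∈ range N, (X - C (m i)) - C b * ∏ i ∈ range (N - 1), (X - C (r i)) ∧
      ∀ i < N - 1, m i < r i ∧ r i < m (i + 1) := by
  set Q := ∏ i ∈ range N, (X - C (m i))
  have hQ : Q.Monic := monic_prod_of_monic _ _ fun i _ => monic_X_sub_C (m i)
  have hQd : Q.natDegree = N := by simp [Q]
  set a := Q.nextCoeff - P.nextCoeff
  obtain ⟨b, hb, r, hD, hr⟩ := exists_eq_C_mul_prod_of_neg_one_pow_mul_eval_pos hm hN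
    (D := (X - C a) * Q - P) (hQd ▸ natDegree_X_sub_C_nextCoeff_mul_sub_le hP hQ (by omega))
    fun j hj => by
      have := halt j hj
      rw [show N - j = N - 1 - j + 1 by omega, pow_succ] at this
      rw [eval_sub, eval_mul, (isRoot_prod_X_sub_C_range hj).eq_zero, mul_zero, zero_sub]
      linarith
  exact ⟨a, b, hb, r, by rw [← hD]; ring, hr⟩

/-- **Interlacing criterion.** For monic real-rooted `P` of degree `n ≥ 2` and `Q` of
    degree `n-1` with simple zeros, the zeros interlace iff `P = (x-a)Q - bR` with
    `b > 0` and `R` monic of degree `n-2`; moreover then `R` is real-rooted with zeros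
    interlacing those of `Q`. -/
theorem stmt_5 (n : ℕ) (hn : 2 ≤ n) (P Q : Polynomial ℝ)
    (l m : ℕ → ℝ)
    (hP : P = ∏ i ∈ Finset.range n, (X - C (l i)))
    (hQ : Q = ∏ i ∈ Finset.range (n - 1), (X - C (m i)))
    (hl : ∀ i, i + 1 < n → l i < l (i + 1))
    (hm : ∀ i, i + 1 < n - 1 → m i < m (i + 1)) :
    (∀ i < n - 1, l i < m i ∧ m i < l (i + 1)) ↔
      ∃ (a b : ℝ) (R : Polynomial ℝ) (r : ℕ → ℝ), 0 < b ∧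
        R = ∏ i ∈ Finset.range (n - 2), (X - C (r i)) ∧
        P = (X - C a) * Q - C b * R ∧
        (∀ i < n - 2, m i < r i ∧ r i < m (i + 1)) := by
  have hlm := strictMonoOn_Iio_of_lt_succ hl
  have hmm := strictMonoOn_Iio_of_lt_succ hm
  have hPeval : ∀ x, P.eval x = ∏ i ∈ range n, (x - l i) := fun x => by simp [hP, eval_prod]
  rw [interlace_iff_neg_one_pow_mul_prod_pos hlm hmm]
  simp only [← hPeval]
  constructor
  · intro halt
    obtain ⟨a, b, hb, r, hPab, hr⟩ :=
      exists_eq_X_sub_C_mul_prod_sub_of_neg_one_pow_mul_eval_pos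
        (hP ▸ monic_prod_of_monic _ _ fun i _ => monic_X_sub_C (l i)) (by omega)
        (by simp [hP]; omega) hmm halt
    rw [show n - 1 - 1 = n - 2 by omega] at hPab hr
    exact ⟨a, b, _, r, hb, rfl, hQ ▸ hPab, hr⟩
  · rintro ⟨a, b, R, r, hb, rfl, rfl, hr⟩ j hj
    have hRsign := neg_one_pow_mul_prod_pos_of_interlace hmm (by omega : n - 2 < n - 1) hr
      (by omega : j ≤ n - 2)
    have hQroot : Q.eval (m j) = 0 := hQ ▸ (isRoot_prod_X_sub_C_range hj).eq_zero
    rw [show n - 1 - j = n - 2 - j + 1 by omega, pow_succ]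
    simp only [eval_sub, eval_mul, hQroot, eval_C, eval_prod, eval_X]
    linarith [mul_pos hb hRsign]
end

section
/- With P(x) = ∏_{j=1}^n (x − λ_j), Q(x) = ∏_{i=1}^{n−1} (x − μ_i) having strictly interlacing real zeros (λ_1 < μ_1 < λ_2 < ... < μ_{n−1} < λ_n), set a = Σλ_j − Σμ_i and write P(x) = (x − a)Q(x) − b·R(x) with R monic of degree n−2. Then b = Σ_{1 ≤ i ≤ j ≤ n−1} (μ_i − λ_i)(λ_{j+1} − μ_j) > 0. -/
/-!
Comparing the coefficients of `X ^ (n - 2)` in `P = (X - a) Q - b R` expresses `b` through the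
first two elementary symmetric functions of the `λ j` and the `μ i`; with `a = Σ λ - Σ μ` this
expression telescopes into `Σ_{i ≤ j} (μ i - λ i) (λ (j + 1) - μ j)`, whose terms are products of
two gaps of the interlacing chain and hence positive.
-/

open Polynomial Finset

section Coefficients

variable {R : Type*} [CommRing R] (r : ℕ → R)

lemma coeff_prod_range_X_sub_C_self (t : ℕ) :
    (∏ i ∈ range (t + 1), (X - C (r i))).coeff t = -∑ i ∈ range (t + 1), r i := by
  induction t with
  | zero => simp
  | succ t ih =>
    have hlead : (∏ i ∈ range (t + 1), (X - C (r i))).coeff (t + 1) = 1 := by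
      nontriviality R
      have := (monic_prod_X_sub_C r (range (t + 1))).coeff_natDegree
      rwa [natDegree_finsetProd_X_sub_C_eq_card, card_range] at this
    rw [prod_range_succ, coeff_mul_X_sub_C, ih, hlead, sum_range_succ _ (t + 1)]
    ring

lemma coeff_X_mul_prod_range_X_sub_C (t : ℕ) :
    (X * ∏ i ∈ range (t + 1), (X - C (r i))).coeff t =
      ∑ j ∈ range (t + 1), ∑ i ∈ range j, r i * r j := by
  induction t with
  | zero => simp
  | succ t ih =>
    rw [prod_range_succ, ← mul_assoc, coeff_mul_X_sub_C, ih, coeff_X_mul,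
      coeff_prod_range_X_sub_C_self, sum_range_succ _ (t + 1), ← sum_mul]
    ring

lemma coeff_X_sub_C_mul_prod_range_X_sub_C (c : R) (t : ℕ) :
    ((X - C c) * ∏ i ∈ range (t + 1), (X - C (r i))).coeff t =
      ∑ j ∈ range (t + 1), ∑ i ∈ range j, r i * r j + c * ∑ i ∈ range (t + 1), r i := by
  rw [sub_mul, coeff_sub, coeff_C_mul, coeff_X_mul_prod_range_X_sub_C,
    coeff_prod_range_X_sub_C_self]
  ring

lemma coeff_prod_range_X_sub_C_succ_succ (t : ℕ) :
    (∏ i ∈ range (t + 2), (X - C (r i))).coeff t =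
      ∑ j ∈ range (t + 2), ∑ i ∈ range j, r i * r j := by
  rw [prod_range_succ, mul_comm, coeff_X_sub_C_mul_prod_range_X_sub_C,
    sum_range_succ (fun j => ∑ i ∈ range j, r i * r j) (t + 1), ← sum_mul]
  ring

end Coefficients

lemma sum_interlacing_gaps_eq {R : Type*} [CommRing R] (l m : ℕ → R) (t : ℕ) :
    ∑ j ∈ range t, ∑ i ∈ range (j + 1), (m i - l i) * (l (j + 1) - m j) =
      ∑ j ∈ range t, ∑ i ∈ range j, m i * m j
        + (∑ i ∈ range (t + 1), l i - ∑ i ∈ range t, m i) * ∑ i ∈ range t, m i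
        - ∑ j ∈ range (t + 1), ∑ i ∈ range j, l i * l j := by
  induction t with
  | zero => simp
  | succ t ih =>
    rw [sum_range_succ _ t, ih, ← sum_mul, sum_sub_distrib,
      sum_range_succ (fun j => ∑ i ∈ range j, m i * m j) t,
      sum_range_succ (fun j => ∑ i ∈ range j, l i * l j) (t + 1),
      sum_range_succ m t, sum_range_succ l (t + 1), ← sum_mul, ← sum_mul]
    ring

lemma sum_interlacing_gaps_pos {R : Type*} [CommRing R] [LinearOrder R] [IsStrictOrderedRing R]
    {l m : ℕ → R} {t : ℕ} (ht : 0 < t) (hinter : ∀ i < t, l i < m i ∧ m i < l (i + 1)) :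
    0 < ∑ j ∈ range t, ∑ i ∈ range (j + 1), (m i - l i) * (l (j + 1) - m j) := by
  refine sum_pos (fun j hj => sum_pos (fun i hi => ?_) nonempty_range_add_one)
    (nonempty_range_iff.2 ht.ne')
  have hj : j < t := mem_range.1 hj
  have hi : i < t := (mem_range.1 hi).trans_le hj
  exact mul_pos (sub_pos.2 (hinter i hi).1) (sub_pos.2 (hinter j hj).2)

/-- With interlacing zeros `l 0 < m 0 < l 1 < ... < m (n-2) < l (n-1)`,
    `a = Σ l - Σ m` and `P = (x-a)Q - bR` with `R` monic of degree `n-2`, the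
    coefficient `b` equals `Σ_{0 ≤ i ≤ j ≤ n-2} (m i - l i)(l (j+1) - m j)`, which
    is positive. (Zero-based indexing of the 1-based statement.) -/
theorem stmt_6 (n : ℕ) (hn : 2 ≤ n) (P Q R : Polynomial ℝ)
    (l m : ℕ → ℝ) (a b : ℝ)
    (hP : P = ∏ i ∈ Finset.range n, (X - C (l i)))
    (hQ : Q = ∏ i ∈ Finset.range (n - 1), (X - C (m i)))
    (hinter : ∀ i < n - 1, l i < m i ∧ m i < l (i + 1))
    (ha : a = (∑ j ∈ Finset.range n, l j) - ∑ i ∈ Finset.range (n - 1), m i)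
    (hR : R.Monic) (hRdeg : R.natDegree = n - 2)
    (hdecomp : P = (X - C a) * Q - C b * R) :
    b = ∑ j ∈ Finset.range (n - 1), ∑ i ∈ Finset.range (j + 1),
          (m i - l i) * (l (j + 1) - m j) ∧ 0 < b := by
  obtain ⟨k, rfl⟩ : ∃ k, n = k + 2 := ⟨n - 2, by omega⟩
  simp only [show k + 2 - 1 = k + 1 from rfl, Nat.add_sub_cancel] at hQ hinter ha hRdeg ⊢
  have hRk : R.coeff k = 1 := hRdeg ▸ hR.coeff_natDegree
  have hcoeff := congrArg (coeff · k) hdecomp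
  simp only [coeff_sub, coeff_C_mul, hRk, mul_one, hP, hQ,
    coeff_prod_range_X_sub_C_succ_succ, coeff_X_sub_C_mul_prod_range_X_sub_C] at hcoeff
  have hb : b = ∑ j ∈ range (k + 1), ∑ i ∈ range (j + 1), (m i - l i) * (l (j + 1) - m j) := by
    rw [sum_interlacing_gaps_eq, ← ha]
    linarith
  exact ⟨hb, hb ▸ sum_interlacing_gaps_pos k.succ_pos hinter⟩
end

section
/- Let P and Q be monic real polynomials with deg P = deg Q + 1. Then Q/P admits a J-fraction representation 1/(x − a_0 − b_0²/(x − a_1 − b_1²/(... − b_{N−1}²/(x − a_N)))) with real a_k and positive b_j if and only if P and Q have only real simple zeros and the zeros of P and Q strictly interlace. -/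
/-!
Splitting off the first partial quotient of a J-fraction gives `P = (x - a₀) P₁ - b₀² Q₁` and
`Q = P₁`, where `P₁, Q₁` are the polynomials of the tail fraction, so both directions go by
induction on the degree. If the zeros `l₀ < ⋯ < l_N` of `P₁` interlace with those of `Q₁`, then
`P(lᵢ) = -b₀² Q₁(lᵢ)` has sign `(-1)^(N+1-i)`; together with the signs of `P` near `±∞`, the
intermediate value theorem puts one zero of `P` in each of the `N + 2` gaps. Conversely, division
with remainder gives `P = (x - a₀) Q - R` with `deg R < deg Q`; at the zeros of `Q` we have
`R = -P`, which alternates in sign, so `R` has a zero between consecutive zeros of `Q` and a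
positive leading coefficient `b₀²`.
-/

open Polynomial

/-- Denominator polynomials of the J-fraction with diagonal coefficients `a k`
    and squared off-diagonal coefficients `c k = b_k²`:
    `P_{-1} = 0`, `P_0 = 1`, `P_{k+1} = (x - a_k) P_k - b_{k-1}² P_{k-1}`, `b_{-1} = 1`. -/
noncomputable def jden (a c : ℕ → ℝ) : ℕ → Polynomial ℝ
  | 0 => 1
  | 1 => X - C (a 0)
  | (k + 2) => (X - C (a (k + 1))) * jden a c (k + 1) - C (c k) * jden a c k

/-- Numerator polynomials of the J-fraction:
    `Q_{-1} = -1`, `Q_0 = 0`, `Q_{k+1} = (x - a_k) Q_k - b_{k-1}² Q_{k-1}`, `b_{-1} = 1`. -/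
noncomputable def jnum (a c : ℕ → ℝ) : ℕ → Polynomial ℝ
  | 0 => 0
  | 1 => 1
  | (k + 2) => (X - C (a (k + 1))) * jnum a c (k + 1) - C (c k) * jnum a c k

open Finset Filter

theorem mul_neg_of_neg_one_pow_mul_pos {x y : ℝ} {e : ℕ} (hx : 0 < (-1) ^ (e + 1) * x)
    (hy : 0 < (-1) ^ e * y) : x * y < 0 := by
  rcases neg_one_pow_eq_or ℝ e with he | he <;> simp only [pow_succ, he] at hx hy <;> nlinarith

namespace Polynomial

theorem neg_one_pow_mul_eval_prod_X_sub_C_pos {r : ℕ → ℝ} {n k : ℕ} {t : ℝ} (hk : k ≤ n)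
    (hlt : ∀ i < k, r i < t) (hgt : ∀ i, k ≤ i → i < n → t < r i) :
    0 < (-1) ^ (n - k) * (∏ i ∈ range n, (X - C (r i))).eval t := by
  have hsplit : (-1) ^ (n - k) * (∏ i ∈ range n, (X - C (r i))).eval t =
      (∏ i ∈ range k, (t - r i)) * ∏ i ∈ Ico k n, (r i - t) := by
    rw [eval_prod, ← prod_range_mul_prod_Ico _ hk, mul_left_comm, ← Nat.card_Ico k n,
      ← prod_neg]
    simp
  rw [hsplit]
  exact mul_pos (prod_pos fun i hi => sub_pos.2 (hlt i (mem_range.1 hi)))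
    (prod_pos fun i hi => sub_pos.2 (hgt i (mem_Ico.1 hi).1 (mem_Ico.1 hi).2))

theorem isRoot_prod_X_sub_C {R : Type*} [CommRing R] [IsDomain R] {r : ℕ → R} {n i : ℕ}
    (hi : i < n) : (∏ j ∈ range n, (X - C (r j))).IsRoot (r i) :=
  (isRoot_prod _ _ _).2 ⟨i, mem_range.2 hi, root_X_sub_C.2 rfl⟩

theorem exists_isRoot_mem_Ioo_of_mul_neg {p : ℝ[X]} {x y : ℝ} (hxy : x < y)
    (h : p.eval x * p.eval y < 0) : ∃ z ∈ Set.Ioo x y, p.IsRoot z := by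
  rcases mul_neg_iff.1 h with ⟨hx, hy⟩ | ⟨hx, hy⟩
  · exact intermediate_value_Ioo' hxy.le p.continuousOn ⟨hy, hx⟩
  · exact intermediate_value_Ioo hxy.le p.continuousOn ⟨hx, hy⟩

theorem eq_C_leadingCoeff_mul_prod_of_isRoot {R : Type*} [CommRing R] [IsDomain R]
    {p : R[X]} {z : ℕ → R} {n : ℕ} (hp : p ≠ 0) (hdeg : p.natDegree ≤ n)
    (hz : Set.InjOn z (Set.Iio n)) (hroot : ∀ i < n, p.IsRoot (z i)) :
    p = C p.leadingCoeff * ∏ i ∈ range n, (X - C (z i)) := by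
  classical
  have hzs : ((range n).image z).val ≤ p.roots := by
    rw [Multiset.le_iff_subset (nodup _)]
    intro x hx
    obtain ⟨i, hi, rfl⟩ := mem_image.1 (mem_def.2 hx)
    exact (mem_roots hp).2 (hroot i (mem_range.1 hi))
  have hcard : ((range n).image z).card = n := by
    rw [card_image_of_injOn (by simpa using hz), card_range]
  have hroots : p.roots = ((range n).image z).val :=
    (Multiset.eq_of_le_of_card_le hzs (by
      rw [← card_def, hcard]; exact (card_roots' p).trans hdeg)).symm
  have hcardroots : Multiset.card p.roots = p.natDegree :=
    le_antisymm (card_roots' p) (by rw [hroots, ← card_def, hcard]; exact hdeg)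
  conv_lhs => rw [← C_leadingCoeff_mul_prod_multiset_X_sub_C hcardroots, hroots]
  rw [← prod_eq_multiset_prod, prod_image (by simpa using hz)]

theorem Monic.eventually_eval_pos_atTop {p : ℝ[X]} (hp : p.Monic) :
    ∀ᶠ x in atTop, 0 < p.eval x := by
  rcases Nat.eq_zero_or_pos p.natDegree with hd | hd
  · rw [hp.natDegree_eq_zero.1 hd]
    simp
  · refine (tendsto_atTop_of_leadingCoeff_nonneg p ?_ ?_).eventually_gt_atTop 0
    · exact natDegree_pos_iff_degree_pos.1 hd
    · rw [hp.leadingCoeff]; exact zero_le_one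

theorem Monic.eventually_neg_one_pow_mul_eval_pos_atBot {p : ℝ[X]} (hp : p.Monic) :
    ∀ᶠ x in atBot, 0 < (-1) ^ p.natDegree * p.eval x :=
  (tendsto_neg_atBot_atTop.eventually
    hp.neg_one_pow_natDegree_mul_comp_neg_X.eventually_eval_pos_atTop).mono fun x hx => by
    simpa using hx

theorem Monic.divByMonic_eq_X_add_C {R : Type*} [CommRing R] [Nontrivial R] {p q : R[X]}
    (hp : p.Monic) (hq : q.Monic) (hdeg : p.natDegree = q.natDegree + 1) :
    p /ₘ q = X + C ((p /ₘ q).coeff 0) := by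
  refine Monic.eq_X_add_C ?_ (by rw [natDegree_divByMonic p hq, hdeg]; omega)
  rw [Monic, leadingCoeff_divByMonic_of_monic hq, hp.leadingCoeff]
  rw [degree_eq_natDegree hq.ne_zero, degree_eq_natDegree hp.ne_zero, hdeg]
  exact_mod_cast Nat.le_succ _

end Polynomial

/-- `l 0 < m 0 < l 1 < m 1 < ⋯ < m (n - 1) < l n`. -/
def Interlace (l m : ℕ → ℝ) (n : ℕ) : Prop :=
  ∀ i < n, l i < m i ∧ m i < l (i + 1)

namespace Interlace

variable {l m : ℕ → ℝ} {n i : ℕ}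

theorem strictMonoOn_left (h : Interlace l m n) : StrictMonoOn l (Set.Iic n) :=
  strictMonoOn_Iic_of_lt_succ fun i hi => (h i hi).1.trans (h i hi).2

theorem strictMonoOn_right (h : Interlace l m n) : StrictMonoOn m (Set.Iio n) := by
  intro i hi j hj hij
  have hl : l (i + 1) ≤ l j :=
    h.strictMonoOn_left.monotoneOn (Set.mem_Iic.2 hi) (Set.mem_Iic.2 (le_of_lt hj)) hij
  exact ((h i hi).2.trans_le hl).trans (h j hj).1

theorem neg_one_pow_mul_eval_prod_right_pos (h : Interlace l m n) (hi : i ≤ n) :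
    0 < (-1) ^ (n - i) * (∏ j ∈ range n, (X - C (m j))).eval (l i) := by
  refine neg_one_pow_mul_eval_prod_X_sub_C_pos hi (fun j hj => ?_) fun j hij hj => ?_
  · exact (h j (by omega)).2.trans_le
      (h.strictMonoOn_left.monotoneOn (Set.mem_Iic.2 (by omega)) (Set.mem_Iic.2 hi) hj)
  · exact (h.strictMonoOn_left.monotoneOn (Set.mem_Iic.2 hi) (Set.mem_Iic.2 hj.le) hij).trans_lt
      (h j hj).1

theorem neg_one_pow_mul_eval_prod_left_pos (h : Interlace l m n) (hi : i < n) :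
    0 < (-1) ^ (n - i) * (∏ j ∈ range (n + 1), (X - C (l j))).eval (m i) := by
  rw [show n - i = n + 1 - (i + 1) by omega]
  refine neg_one_pow_mul_eval_prod_X_sub_C_pos (by omega) (fun j hj => ?_) fun j hij hj => ?_
  · exact (h.strictMonoOn_left.monotoneOn (Set.mem_Iic.2 (by omega)) (Set.mem_Iic.2 hi.le)
      (by omega)).trans_lt (h i hi).1
  · exact (h i hi).2.trans_le
      (h.strictMonoOn_left.monotoneOn (Set.mem_Iic.2 (by omega)) (Set.mem_Iic.2 (by omega)) hij)

end Interlace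

namespace Polynomial

theorem exists_eq_C_mul_prod_interlace_of_alternating {p : ℝ[X]} {t : ℕ → ℝ} {n : ℕ}
    (hdeg : p.natDegree ≤ n) (ht : ∀ i < n, t i < t (i + 1))
    (hsign : ∀ i ≤ n, 0 < (-1) ^ (n - i) * p.eval (t i)) :
    ∃ z, 0 < p.leadingCoeff ∧ p = C p.leadingCoeff * ∏ i ∈ range n, (X - C (z i)) ∧
      Interlace t z n := by
  have hgap : ∀ i < n, ∃ z ∈ Set.Ioo (t i) (t (i + 1)), p.IsRoot z := fun i hi =>
    exists_isRoot_mem_Ioo_of_mul_neg (ht i hi) (mul_neg_of_neg_one_pow_mul_pos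
      (by rw [← show n - i = n - (i + 1) + 1 by omega]; exact hsign i hi.le) (hsign (i + 1) hi))
  choose! z hz hroot using hgap
  have hint : Interlace t z n := hz
  have hp : p ≠ 0 := by
    rintro rfl
    simpa using hsign n le_rfl
  have hfac := eq_C_leadingCoeff_mul_prod_of_isRoot hp hdeg hint.strictMonoOn_right.injOn hroot
  refine ⟨z, ?_, hfac, hint⟩
  have hprod : 0 < (∏ i ∈ range n, (X - C (z i))).eval (t n) := by
    simpa using neg_one_pow_mul_eval_prod_X_sub_C_pos le_rfl
      (fun i hi => (hint i hi).2.trans_le (hint.strictMonoOn_left.monotoneOn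
        (Set.mem_Iic.2 hi) (Set.mem_Iic.2 le_rfl) hi)) (fun i hi hi' => absurd hi' hi.not_gt)
  have hpn := hsign n le_rfl
  rw [hfac, eval_mul, eval_C, Nat.sub_self, pow_zero, one_mul] at hpn
  exact pos_of_mul_pos_left hpn hprod.le

theorem Monic.exists_eq_prod_interlace_of_alternating {p : ℝ[X]} {l : ℕ → ℝ} {n : ℕ}
    (hp : p.Monic) (hdeg : p.natDegree = n + 1) (hl : ∀ i, i + 1 < n → l i < l (i + 1))
    (hsign : ∀ i < n, 0 < (-1) ^ (n - i) * p.eval (l i)) :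
    ∃ z, p = ∏ i ∈ range (n + 1), (X - C (z i)) ∧ Interlace z l n := by
  obtain ⟨x₀, hx₀, hx₀l⟩ :=
    (hp.eventually_neg_one_pow_mul_eval_pos_atBot.and (eventually_lt_atBot (l 0))).exists
  obtain ⟨x₁, hx₁, hx₁l, hx₁x₀⟩ := (hp.eventually_eval_pos_atTop.and
    ((eventually_gt_atTop (l (n - 1))).and (eventually_gt_atTop x₀))).exists
  -- `l` padded with a point below and a point above all zeros of `p`
  let t : ℕ → ℝ := fun
    | 0 => x₀
    | i + 1 => if i < n then l i else x₁
  have ht : ∀ i < n + 1, t i < t (i + 1) := by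
    rintro (_ | i) hi
    · dsimp only [t]
      split_ifs <;> assumption
    · dsimp only [t]
      rw [if_pos (by omega)]
      split_ifs with h
      · exact hl i h
      · rwa [show i = n - 1 by omega]
  have hsign' : ∀ i ≤ n + 1, 0 < (-1) ^ (n + 1 - i) * p.eval (t i) := by
    rintro (_ | i) hi
    · rwa [← hdeg]
    · dsimp only [t]
      split_ifs with h
      · rw [show n + 1 - (i + 1) = n - i by omega]
        exact hsign i h
      · simpa [show i = n by omega] using hx₁
  obtain ⟨z, -, hfac, hint⟩ := exists_eq_C_mul_prod_interlace_of_alternating hdeg.le ht hsign'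
  refine ⟨z, by rwa [hp.leadingCoeff, C_1, one_mul] at hfac, fun i hi => ?_⟩
  have ht_succ : t (i + 1) = l i := if_pos hi
  rw [← ht_succ]
  exact ⟨(hint i (by omega)).2, (hint (i + 1) (by omega)).1⟩

end Polynomial

namespace Interlace

variable {l m : ℕ → ℝ} {n : ℕ}

theorem exists_sub_mul_prod_eq_prod (h : Interlace l m n) (a : ℝ) {c : ℝ} (hc : 0 < c) :
    ∃ z, (X - C a) * ∏ i ∈ range (n + 1), (X - C (l i)) - C c * ∏ i ∈ range n, (X - C (m i)) =
      ∏ i ∈ range (n + 2), (X - C (z i)) ∧ Interlace z l (n + 1) := by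
  set Q := ∏ i ∈ range (n + 1), (X - C (l i))
  set R := ∏ i ∈ range n, (X - C (m i))
  have hQ : Q.Monic := monic_prod_of_monic _ _ fun i _ => monic_X_sub_C (l i)
  have hXQ : ((X - C a) * Q).natDegree = n + 2 := by
    rw [(monic_X_sub_C a).natDegree_mul hQ, natDegree_X_sub_C]
    simp only [Q, natDegree_finsetProd_X_sub_C_eq_card, card_range]
    omega
  have hR : (C c * R).natDegree < ((X - C a) * Q).natDegree := by
    rw [hXQ]
    exact (natDegree_C_mul_le c R).trans_lt (by simp [R])
  have hsign : ∀ i < n + 1, 0 < (-1) ^ (n + 1 - i) * ((X - C a) * Q - C c * R).eval (l i) := by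
    intro i hi
    calc (0 : ℝ) < c * ((-1) ^ (n - i) * R.eval (l i)) :=
          mul_pos hc (h.neg_one_pow_mul_eval_prod_right_pos (by omega))
      _ = _ := by
        rw [show n + 1 - i = n - i + 1 by omega, eval_sub, eval_mul, isRoot_prod_X_sub_C hi,
          eval_mul, eval_C]
        ring
  exact ((monic_X_sub_C a).mul hQ).sub_of_left (degree_lt_degree hR)
    |>.exists_eq_prod_interlace_of_alternating
      ((natDegree_sub_eq_left_of_natDegree_lt hR).trans hXQ) (fun i hi => h.strictMonoOn_left
        (Set.mem_Iic.2 (by omega)) (Set.mem_Iic.2 (by omega)) (Nat.lt_succ_self i)) hsign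

theorem exists_prod_eq_sub_mul_prod (h : Interlace l m (n + 1)) :
    ∃ a c z, 0 < c ∧ ∏ i ∈ range (n + 2), (X - C (l i)) =
      (X - C a) * ∏ i ∈ range (n + 1), (X - C (m i)) - C c * ∏ i ∈ range n, (X - C (z i)) ∧
      Interlace m z n := by
  set P := ∏ i ∈ range (n + 2), (X - C (l i))
  set Q := ∏ i ∈ range (n + 1), (X - C (m i))
  have hP : P.Monic := monic_prod_of_monic _ _ fun i _ => monic_X_sub_C (l i)
  have hQ : Q.Monic := monic_prod_of_monic _ _ fun i _ => monic_X_sub_C (m i)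
  have hPdeg : P.natDegree = n + 2 := by simp [P]
  have hQdeg : Q.natDegree = n + 1 := by simp [Q]
  have hdiv := hP.divByMonic_eq_X_add_C hQ (by rw [hPdeg, hQdeg])
  set R := -(P %ₘ Q)
  have hRdeg : R.natDegree ≤ n := by
    have := natDegree_modByMonic_lt P hQ fun h1 => by simp [h1] at hQdeg
    rw [natDegree_neg]
    omega
  have hsign : ∀ i ≤ n, 0 < (-1) ^ (n - i) * R.eval (m i) := by
    intro i hi
    have hRi : R.eval (m i) = -P.eval (m i) := by
      conv_rhs => rw [← modByMonic_add_div P Q]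
      rw [eval_neg, eval_add, eval_mul, isRoot_prod_X_sub_C (by omega), zero_mul, add_zero]
    have hPi := h.neg_one_pow_mul_eval_prod_left_pos (i := i) (by omega)
    rw [show n + 1 - i = n - i + 1 by omega, pow_succ] at hPi
    rw [hRi]
    convert hPi using 1
    ring
  obtain ⟨z, hc, hfac, hint⟩ := exists_eq_C_mul_prod_interlace_of_alternating hRdeg
    (fun i hi => h.strictMonoOn_right (Set.mem_Iio.2 (by omega)) (Set.mem_Iio.2 (by omega))
      (Nat.lt_succ_self i)) hsign
  refine ⟨-(P /ₘ Q).coeff 0, _, z, hc, ?_, hint⟩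
  rw [← hfac, map_neg]
  linear_combination (modByMonic_add_div P Q).symm + Q * hdiv

end Interlace

theorem jnum_succ (a c : ℕ → ℝ) :
    ∀ k, jnum a c (k + 1) = jden (a ∘ Nat.succ) (c ∘ Nat.succ) k
  | 0 => by simp [jnum, jden]
  | 1 => by simp [jnum, jden]
  | k + 2 => by
    rw [jnum, jden, jnum_succ a c (k + 1), jnum_succ a c k]
    rfl

theorem jden_add_two (a c : ℕ → ℝ) :
    ∀ k, jden a c (k + 2) = (X - C (a 0)) * jden (a ∘ Nat.succ) (c ∘ Nat.succ) (k + 1) -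
      C (c 0) * jnum (a ∘ Nat.succ) (c ∘ Nat.succ) (k + 1)
  | 0 => by simp only [jden, jnum, Function.comp]; ring
  | 1 => by simp only [jden, jnum, Function.comp]; ring
  | k + 2 => by
    rw [jden, jden_add_two a c (k + 1), jden_add_two a c k, show k + 2 + 1 = k + 1 + 2 from rfl,
      jden.eq_3 _ _ (k + 1), jnum.eq_3 _ _ (k + 1)]
    simp only [Function.comp_apply, Nat.succ_eq_add_one]
    ring

theorem exists_interlace_jden_jnum {a c : ℕ → ℝ} (hc : ∀ j, 0 < c j) (N : ℕ) :
    ∃ l m, jden a c (N + 1) = ∏ i ∈ range (N + 1), (X - C (l i)) ∧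
      jnum a c (N + 1) = ∏ i ∈ range N, (X - C (m i)) ∧ Interlace l m N := by
  induction N generalizing a c with
  | zero =>
    exact ⟨fun _ => a 0, 0, by simp [jden], by simp [jnum], fun i hi => absurd hi i.not_lt_zero⟩
  | succ N ih =>
    obtain ⟨l, m, hden, hnum, h⟩ := ih (a := a ∘ Nat.succ) (c := c ∘ Nat.succ) fun j => hc (j + 1)
    obtain ⟨z, hz, hint⟩ := h.exists_sub_mul_prod_eq_prod (a 0) (hc 0)
    exact ⟨z, l, by rw [jden_add_two, hden, hnum, hz], by rw [jnum_succ, hden], hint⟩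

theorem Interlace.exists_jden_jnum {l m : ℕ → ℝ} {N : ℕ} (h : Interlace l m N) :
    ∃ a c : ℕ → ℝ, (∀ j, 0 < c j) ∧ ∏ i ∈ range (N + 1), (X - C (l i)) = jden a c (N + 1) ∧
      ∏ i ∈ range N, (X - C (m i)) = jnum a c (N + 1) := by
  induction N generalizing l m with
  | zero => exact ⟨fun _ => l 0, fun _ => 1, fun _ => one_pos, by simp [jden], by simp [jnum]⟩
  | succ N ih =>
    obtain ⟨a₀, c₀, z, hc₀, hP, hint⟩ := h.exists_prod_eq_sub_mul_prod
    obtain ⟨a, c, hc, hden, hnum⟩ := ih hint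
    refine ⟨fun | 0 => a₀ | j + 1 => a j, fun | 0 => c₀ | j + 1 => c j,
      fun | 0 => hc₀ | j + 1 => hc j, ?_, ?_⟩
    · rw [jden_add_two, hP, hden, hnum]
      rfl
    · rw [jnum_succ, hden]
      rfl

theorem stmt_7_general (P Q : Polynomial ℝ)
    (hdeg : P.natDegree = Q.natDegree + 1) :
    (∃ a c : ℕ → ℝ, (∀ j, 0 < c j) ∧
        P = jden a c (Q.natDegree + 1) ∧ Q = jnum a c (Q.natDegree + 1)) ↔
      (∃ l m : ℕ → ℝ,
        P = ∏ i ∈ Finset.range P.natDegree, (X - C (l i)) ∧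
        Q = ∏ i ∈ Finset.range Q.natDegree, (X - C (m i)) ∧
        (∀ i < Q.natDegree, l i < m i ∧ m i < l (i + 1))) := by
  rw [hdeg]
  constructor
  · rintro ⟨a, c, hc, hP, hQ⟩
    obtain ⟨l, m, hden, hnum, h⟩ := exists_interlace_jden_jnum hc Q.natDegree
    exact ⟨l, m, hP.trans hden, hQ.trans hnum, h⟩
  · rintro ⟨l, m, hP, hQ, h⟩
    obtain ⟨a, c, hc, hden, hnum⟩ := Interlace.exists_jden_jnum h
    exact ⟨a, c, hc, hP.trans hden, hQ.trans hnum⟩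

/-- `Q/P` admits a J-fraction representation (i.e. `P` and `Q` are the denominator and
    numerator polynomials of some J-fraction with real `a_k` and positive `b_j`,
    encoded via `c j = b_j² > 0`) iff `P` and `Q` have only real simple zeros and the
    zeros strictly interlace. -/
theorem stmt_7 (P Q : Polynomial ℝ) (hPm : P.Monic) (hQm : Q.Monic)
    (hdeg : P.natDegree = Q.natDegree + 1) :
    (∃ a c : ℕ → ℝ, (∀ j, 0 < c j) ∧
        P = jden a c (Q.natDegree + 1) ∧ Q = jnum a c (Q.natDegree + 1)) ↔
      (∃ l m : ℕ → ℝ,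
        P = ∏ i ∈ Finset.range P.natDegree, (X - C (l i)) ∧
        Q = ∏ i ∈ Finset.range Q.natDegree, (X - C (m i)) ∧
        (∀ i < Q.natDegree, l i < m i ∧ m i < l (i + 1))) :=
  stmt_7_general P Q hdeg
end

section
/- For n ≥ 2, the rational function T_n(x)/((x² − 1) U_{n−1}(x)) admits the palindromic J-fraction expansion 1/(x − (1/2)/(x − (1/4)/(⋯ − (1/4)/(x − (1/2)/x)))) with diagonal coefficients all 0, first and last off-diagonal coefficients b² = 1/2, and all intermediate off-diagonal coefficients b² = 1/4. -/
/-!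
With zero diagonal, `b₀² = 1/2` and `b_j² = 1/4` afterwards, the three-term recurrence of the
J-fraction is that of `T_k` and `U_{k-1}` rescaled by `2^{k-1}`, so the denominators and numerators
are `2^{1-k} T_k` and `2^{1-k} U_{k-1}`. Replacing the last coefficient `1/4` by `1/2` makes the
final step `x P_n - ½ P_{n-1} ∝ x T_n - T_{n-1} = (x² - 1) U_{n-1}` and
`x Q_n - ½ Q_{n-1} ∝ x U_{n-1} - U_{n-2} = T_n`.
-/

open Polynomial Polynomial.Chebyshev

open Polynomial

noncomputable def chebyshevJacobiCoeff (j : ℕ) : ℝ := if j = 0 then 1/2 else 1/4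

theorem two_mul_C_half : (2 : ℝ[X]) * C (1 / 2) = 1 := by
  rw [← Polynomial.C_ofNat, ← Polynomial.C_mul]; norm_num

theorem X_mul_T_sub_T (R : Type*) [CommRing R] (n : ℤ) :
    X * T R (n + 1) - T R n = (X ^ 2 - 1) * U R n := by
  linear_combination T_eq_X_mul_T_sub_pol_U R n - T_add_two R n

theorem jden_congr {a c c' : ℕ → ℝ} {k : ℕ} (h : ∀ j, j + 2 ≤ k → c j = c' j) :
    jden a c k = jden a c' k := by
  induction k using jden.induct with
  | case1 | case2 => rfl
  | case3 k ih₁ ih₂ =>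
    rw [jden, jden, ih₁ fun j hj => h j (by omega), ih₂ fun j hj => h j (by omega), h k le_rfl]

theorem jnum_congr {a c c' : ℕ → ℝ} {k : ℕ} (h : ∀ j, j + 2 ≤ k → c j = c' j) :
    jnum a c k = jnum a c' k := by
  induction k using jnum.induct with
  | case1 | case2 => rfl
  | case3 k ih₁ ih₂ =>
    rw [jnum, jnum, ih₁ fun j hj => h j (by omega), ih₂ fun j hj => h j (by omega), h k le_rfl]

theorem two_pow_mul_eq_of_recurrence {R : Type*} [CommRing R] {c : R} (hc : 4 * c = 1)
    {p q : ℕ → R[X]} (hp : ∀ k, p (k + 2) = X * p (k + 1) - C c * p k)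
    (hq : ∀ k, q (k + 2) = 2 * X * q (k + 1) - q k) (h₀ : p 0 = q 0) (h₁ : 2 * p 1 = q 1) :
    ∀ k, 2 ^ k * p k = q k := by
  have h4 : (4 : R[X]) * C c = 1 := by
    rw [← Polynomial.C_ofNat, ← Polynomial.C_mul, hc, Polynomial.C_1]
  refine Nat.twoStepInduction (by simpa using h₀) (by simpa using h₁) fun k ihk ihk₁ => ?_
  rw [hp, hq, ← ihk, ← ihk₁]
  linear_combination -(2 ^ k * p k) * h4

theorem two_pow_mul_jden_chebyshevJacobiCoeff (k : ℕ) :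
    2 ^ k * jden (fun _ => 0) chebyshevJacobiCoeff (k + 1) = T ℝ (k + 1) := by
  refine two_pow_mul_eq_of_recurrence (c := 1/4) (p := fun k => jden _ _ (k + 1))
    (q := fun k : ℕ => T ℝ (k + 1)) (by norm_num) (fun k => ?_) (fun k => ?_) ?_ ?_ k
  · simp [jden, chebyshevJacobiCoeff]
  · convert T_add_two ℝ ((k : ℤ) + 1) using 2 <;> push_cast <;> ring
  · simp [jden]
  · simp only [jden, chebyshevJacobiCoeff, if_pos, map_zero, sub_zero, mul_one, Nat.cast_one,
      one_add_one_eq_two, T_two]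
    linear_combination -two_mul_C_half

theorem two_pow_mul_jnum_chebyshevJacobiCoeff (k : ℕ) :
    2 ^ k * jnum (fun _ => 0) chebyshevJacobiCoeff (k + 1) = U ℝ k := by
  refine two_pow_mul_eq_of_recurrence (c := 1/4) (p := fun k => jnum _ _ (k + 1))
    (q := fun k : ℕ => U ℝ k) (by norm_num) (fun k => ?_) (fun k => ?_) ?_ ?_ k
  · simp [jnum, chebyshevJacobiCoeff]
  · push_cast; exact U_add_two ℝ _
  · simp [jnum]
  · simp [jnum, U_one]

theorem two_pow_mul_jden_of_last_eq_half {c : ℕ → ℝ} {n : ℕ} (hn : 2 ≤ n)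
    (hc : ∀ j, j + 2 ≤ n → c j = chebyshevJacobiCoeff j) (hlast : c (n - 1) = 1 / 2) :
    2 ^ (n - 1) * jden (fun _ => 0) c (n + 1) = (X ^ 2 - 1) * U ℝ ((n : ℤ) - 1) := by
  obtain ⟨m, rfl⟩ : ∃ m, n = m + 2 := ⟨n - 2, by omega⟩
  have h₁ := two_pow_mul_jden_chebyshevJacobiCoeff m
  have h₂ := two_pow_mul_jden_chebyshevJacobiCoeff (m + 1)
  rw [← jden_congr fun j hj => hc j (by omega)] at h₁ h₂
  have hrec : jden (fun _ => 0) c (m + 2 + 1) =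
      X * jden (fun _ => 0) c (m + 2) - C (1 / 2) * jden (fun _ => 0) c (m + 1) := by
    simp [jden, ← hlast]
  rw [hrec]
  push_cast at h₁ h₂ ⊢
  rw [add_sub_assoc, show (2 : ℤ) - 1 = 1 by norm_num]
  linear_combination X * h₂ - 2 ^ m * jden (fun _ => 0) c (m + 1) * two_mul_C_half - h₁ +
    X_mul_T_sub_T ℝ ((m : ℤ) + 1)

theorem two_pow_mul_jnum_of_last_eq_half {c : ℕ → ℝ} {n : ℕ} (hn : 2 ≤ n)
    (hc : ∀ j, j + 2 ≤ n → c j = chebyshevJacobiCoeff j) (hlast : c (n - 1) = 1 / 2) :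
    2 ^ (n - 1) * jnum (fun _ => 0) c (n + 1) = T ℝ n := by
  obtain ⟨m, rfl⟩ : ∃ m, n = m + 2 := ⟨n - 2, by omega⟩
  have h₁ := two_pow_mul_jnum_chebyshevJacobiCoeff m
  have h₂ := two_pow_mul_jnum_chebyshevJacobiCoeff (m + 1)
  rw [← jnum_congr fun j hj => hc j (by omega)] at h₁ h₂
  have hrec : jnum (fun _ => 0) c (m + 2 + 1) =
      X * jnum (fun _ => 0) c (m + 2) - C (1 / 2) * jnum (fun _ => 0) c (m + 1) := by
    simp [jnum, ← hlast]
  rw [hrec]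
  push_cast at h₁ h₂ ⊢
  linear_combination X * h₂ - 2 ^ m * jnum (fun _ => 0) c (m + 1) * two_mul_C_half - h₁ -
    T_eq_X_mul_U_sub_U ℝ m

/-- **Palindromic J-fraction for Chebyshev polynomials.** For `n ≥ 2`,
    `T_n(x)/((x²-1) U_{n-1}(x))` equals the J-fraction with all diagonal
    coefficients `a_k = 0` and squared off-diagonal coefficients
    `b_0² = b_{n-1}² = 1/2` and `b_j² = 1/4` in between (stated as the
    cross-multiplied identity of the two ratios). -/
theorem stmt_13 (n : ℕ) (hn : 2 ≤ n) :
    T ℝ n * jden (fun _ => 0) (fun j => if j = 0 ∨ j = n - 1 then (1/2 : ℝ) else 1/4) (n + 1) =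
      (X ^ 2 - 1) * U ℝ ((n : ℤ) - 1) *
        jnum (fun _ => 0) (fun j => if j = 0 ∨ j = n - 1 then (1/2 : ℝ) else 1/4) (n + 1) := by
  have hc : ∀ j, j + 2 ≤ n →
      (if j = 0 ∨ j = n - 1 then (1/2 : ℝ) else 1/4) = chebyshevJacobiCoeff j := by
    intro j hj
    simp [chebyshevJacobiCoeff, show j ≠ n - 1 by omega]
  have hden := two_pow_mul_jden_of_last_eq_half hn hc (by simp)
  have hnum := two_pow_mul_jnum_of_last_eq_half hn hc (by simp)
  refine mul_left_cancel₀ (pow_ne_zero (n - 1) two_ne_zero) ?_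
  linear_combination T ℝ n * hden - (X ^ 2 - 1) * U ℝ ((n : ℤ) - 1) * hnum
end
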